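/- For every i ∈ ℤ the dual adapted basis satisfies the finite-band multiplicative relation Ψ⁻_i = γ • (x · Σ_j Q⁻_{ij} Ψ⁻_j), where the sum is over the finitely many j with Q⁻_{ij} ≠ 0 (all such j satisfy i−1 ≤ j ≤ i−1+LM). (This is the componentwise form of the infinite system (γx)⁻¹ Ψ⃗⁻ = Q⁻ Ψ⃗⁻ with constant finite-band matrix Q⁻.) -/

import Mathlib

open Polynomial

/-- The Euler operator `D = x d/dx` on formal Laurent series: `(D f)_n = n • f_n`. -/
noncomputable def eulerD (R : Type*) [CommRing R] : Module.End R (LaurentSeries R) where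
  toFun f :=
    { coeff := fun n => n • f.coeff n
      isPWO_support' := f.isPWO_support'.mono (fun n hn => by
        simp only [Function.mem_support, ne_eq] at hn ⊢
        exact fun h => hn (by rw [h, smul_zero])) }
  map_add' f g := by
    ext n
    simp [smul_add]
  map_smul' r f := by
    ext n
    simp only [HahnSeries.coeff_smul, RingHom.id_apply, zsmul_eq_mul, smul_eq_mul]
    ring

/-- Multiplication by a fixed Laurent series `u`, as an `R`-linear endomorphism. -/
noncomputable def mulOp (R : Type*) [CommRing R] (u : LaurentSeries R) :
    Module.End R (LaurentSeries R) where
  toFun f := u * f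
  map_add' f g := mul_add u f g
  map_smul' r f := by
    simp only [RingHom.id_apply]
    rw [← HahnSeries.C_mul_eq_smul, ← HahnSeries.C_mul_eq_smul, mul_left_comm]

/-- Multiplication by `x` on formal Laurent series. -/
noncomputable def mulX (R : Type*) [CommRing R] : Module.End R (LaurentSeries R) :=
  mulOp R (HahnSeries.single (1 : ℤ) (1 : R))

/-- The recursion operator `R₊ = γ x G(β D)`. -/
noncomputable def Rplus (R : Type*) [CommRing R] (β γ : R) (G : R[X]) :
    Module.End R (LaurentSeries R) :=
  γ • (mulX R ∘ₗ Polynomial.aeval (β • eulerD R) G)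

/-- The recursion operator `R₋ = γ x G(−β D)`. -/
noncomputable def Rminus (R : Type*) [CommRing R] (β γ : R) (G : R[X]) :
    Module.End R (LaurentSeries R) :=
  γ • (mulX R ∘ₗ Polynomial.aeval ((-β) • eulerD R) G)


/-- The polynomial `S(r) = Σ_{k=1}^L k s_k r^k`, as a (Laurent) series in `r`. -/
noncomputable def Spoly (R : Type*) [CommRing R] (L : ℕ) (s : ℕ → R) : LaurentSeries R :=
  ∑ k ∈ Finset.Icc 1 L, ((k : R) * s k) • HahnSeries.single (k : ℤ) (1 : R)

/-- The operator `V₋ = G(Δ₋)` with `Δ₋ = S(r) − β D_r`. -/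
noncomputable def Vminus (R : Type*) [CommRing R] (β : R) (G : Polynomial R) (L : ℕ)
    (s : ℕ → R) : Module.End R (LaurentSeries R) :=
  Polynomial.aeval (mulOp R (Spoly R L s) - β • eulerD R) G

/-- The matrix entry `Q⁻_{ij}`: the coefficient of `r^j` in `V₋(r^{i−1})`. -/
noncomputable def Qminus (R : Type*) [CommRing R] (β : R) (G : Polynomial R) (L : ℕ)
    (s : ℕ → R) (i j : ℤ) : R :=
  (Vminus R β G L s (HahnSeries.single (i - 1) (1 : R))).coeff j

/-!
The series `H̄ = Σ h̄ₙ xⁿ` solves `β D H̄ = -S H̄`. Since `D` is a derivation, multiplication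
by `H̄` therefore intertwines `Δ₋ = S - β D` with `-β D`, so `H̄ · V₋(P) = G(-β D)(H̄ · P)`,
and `G(-β D)` multiplies the coefficient of `xᵐ` by `G(-β m)`. Taking `P = x^{i-1}` gives
`Σⱼ Q⁻ᵢⱼ h̄_{n-1-j} = G(-β (n-1)) h̄_{n-i}`, and the recursion of `ρ` turns
`γ G((1-n) β) ρ_{1-n}⁻¹` into `ρ_{-n}⁻¹`. The band structure holds because `Δ₋` never lowers
the degree and raises it by at most `L`.
-/

section

variable {R : Type*} [CommRing R]

/- The `Algebra R (LaurentSeries R)` instance found by search is `HahnSeries.powerSeriesAlgebra`,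
whose scalar action is not reducibly `HahnSeries.instSMul`, so these are not inferred. -/
instance : IsScalarTower R (LaurentSeries R) (LaurentSeries R) :=
  ⟨fun r f g => by simp only [smul_eq_mul, ← HahnSeries.C_mul_eq_smul, mul_assoc]⟩

instance : SMulCommClass R (LaurentSeries R) (LaurentSeries R) :=
  ⟨fun r f g => by simp only [smul_eq_mul, ← HahnSeries.C_mul_eq_smul, mul_left_comm]⟩

@[simp]
lemma coeff_eulerD (f : LaurentSeries R) (n : ℤ) : (eulerD R f).coeff n = n • f.coeff n := rfl

@[simp]
lemma mulOp_apply (u f : LaurentSeries R) : mulOp R u f = u * f := rfl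

lemma support_eulerD_subset (f : LaurentSeries R) : (eulerD R f).support ⊆ f.support :=
  fun n hn h => hn (by simp [h])

lemma eulerD_mul (f g : LaurentSeries R) :
    eulerD R (f * g) = eulerD R f * g + f * eulerD R g := by
  ext n
  rw [HahnSeries.coeff_add, coeff_eulerD, HahnSeries.coeff_mul,
    HahnSeries.coeff_mul_left' f.isPWO_support (support_eulerD_subset f),
    HahnSeries.coeff_mul_right' g.isPWO_support (support_eulerD_subset g),
    Finset.smul_sum, ← Finset.sum_add_distrib]
  refine Finset.sum_congr rfl fun ij hij => ?_
  obtain ⟨-, -, hn⟩ := Finset.mem_antidiagonal.mp hij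
  simp only [coeff_eulerD, zsmul_eq_mul, ← hn]
  push_cast
  ring

lemma coeff_smul_eulerD_pow_apply (c : R) (k : ℕ) (f : LaurentSeries R) (n : ℤ) :
    (((c • eulerD R) ^ k) f).coeff n = (c * n) ^ k * f.coeff n := by
  induction k with
  | zero => simp
  | succ k ih =>
    rw [pow_succ', Module.End.mul_apply, LinearMap.smul_apply, HahnSeries.coeff_smul,
      coeff_eulerD, ih, smul_eq_mul, zsmul_eq_mul]
    ring

lemma coeff_aeval_smul_eulerD (c : R) (p : R[X]) (f : LaurentSeries R) (n : ℤ) :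
    (aeval (c • eulerD R) p f).coeff n = p.eval (c * n) * f.coeff n := by
  induction p using Polynomial.induction_on' with
  | add p q hp hq => simp [hp, hq, add_mul]
  | monomial k a => simp [aeval_monomial, coeff_smul_eulerD_pow_apply, mul_assoc]

theorem SemiconjBy.aeval {S A : Type*} [CommSemiring S] [Semiring A] [Algebra S A] {f a b : A}
    (h : SemiconjBy f a b) (p : S[X]) : SemiconjBy f (aeval a p) (aeval b p) := by
  induction p using Polynomial.induction_on' with
  | add p q hp hq => simpa only [map_add] using hp.add_right hq
  | monomial k c =>
    simpa only [aeval_monomial] using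
      SemiconjBy.mul_right (Algebra.commutes c f).symm (h.pow_right k)

noncomputable def Deltaminus (β : R) (L : ℕ) (s : ℕ → R) : Module.End R (LaurentSeries R) :=
  mulOp R (Spoly R L s) - β • eulerD R

lemma Vminus_eq_aeval_Deltaminus (β : R) (G : R[X]) (L : ℕ) (s : ℕ → R) :
    Vminus R β G L s = aeval (Deltaminus β L s) G := rfl

lemma coeff_Spoly_mul (L : ℕ) (s : ℕ → R) (f : LaurentSeries R) (n : ℤ) :
    (Spoly R L s * f).coeff n = ∑ k ∈ Finset.Icc 1 L, (k : R) * s k * f.coeff (n - k) := by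
  simp only [Spoly, Finset.sum_mul, smul_mul_assoc, HahnSeries.coeff_sum, HahnSeries.coeff_smul,
    HahnSeries.coeff_single_mul, one_mul, smul_eq_mul]

lemma smul_eulerD_eq_neg_Spoly_mul (β : R) (L : ℕ) (s : ℕ → R) (hbar : ℤ → R)
    (hneg : ∀ n : ℤ, n < 0 → hbar n = 0)
    (hrec : ∀ n : ℤ, 1 ≤ n →
      β * (n : R) * hbar n = -∑ k ∈ Finset.Icc 1 L, (k : R) * s k * hbar (n - (k : ℤ)))
    {H : LaurentSeries R} (hH : H.coeff = hbar) :
    β • eulerD R H = -(Spoly R L s * H) := by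
  ext n
  simp only [HahnSeries.coeff_smul, coeff_eulerD, HahnSeries.coeff_neg, coeff_Spoly_mul, hH,
    smul_eq_mul, zsmul_eq_mul]
  have hterm (k : ℕ) (hk : k ∈ Finset.Icc 1 L) (hn : n ≤ 0) :
      (k : R) * s k * hbar (n - k) = 0 := by
    rw [hneg _ (by grind), mul_zero]
  obtain hn | rfl | hn := lt_trichotomy n 0
  · rw [Finset.sum_eq_zero fun k hk => hterm k hk hn.le, hneg n hn]
    simp
  · rw [Finset.sum_eq_zero fun k hk => hterm k hk le_rfl]
    simp
  · rw [← hrec n hn, mul_assoc]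

lemma semiconjBy_mulOp_of_smul_eulerD_eq (β : R) (L : ℕ) (s : ℕ → R) {H : LaurentSeries R}
    (hH : β • eulerD R H = -(Spoly R L s * H)) :
    SemiconjBy (mulOp R H) (Deltaminus β L s) ((-β) • eulerD R) := by
  refine LinearMap.ext fun f => ?_
  simp only [Deltaminus, Module.End.mul_apply, LinearMap.sub_apply, LinearMap.smul_apply,
    mulOp_apply]
  rw [eulerD_mul, neg_smul, smul_add, ← smul_mul_assoc, hH, mul_sub, mul_smul_comm]
  ring

lemma coeff_mul_Vminus (β : R) (G : R[X]) (L : ℕ) (s : ℕ → R) {H : LaurentSeries R}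
    (hH : β • eulerD R H = -(Spoly R L s * H)) (P : LaurentSeries R) (n : ℤ) :
    (H * Vminus R β G L s P).coeff n = G.eval (-β * n) * (H * P).coeff n := by
  have h := LinearMap.congr_fun ((semiconjBy_mulOp_of_smul_eulerD_eq β L s hH).aeval G) P
  simp only [Module.End.mul_apply, mulOp_apply] at h
  rw [Vminus_eq_aeval_Deltaminus, h, coeff_aeval_smul_eulerD]

lemma support_Deltaminus_subset (β : R) (L : ℕ) (s : ℕ → R) {f : LaurentSeries R} {a b : ℤ}
    (hf : f.support ⊆ Set.Icc a b) :
    (Deltaminus β L s f).support ⊆ Set.Icc a (b + L) := by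
  intro n hn
  rcases HahnSeries.support_sub_subset _ _ hn with hS | hD
  · rw [mulOp_apply, HahnSeries.mem_support, coeff_Spoly_mul] at hS
    obtain ⟨k, hk, hne⟩ := Finset.exists_ne_zero_of_sum_ne_zero hS
    have := hf (right_ne_zero_of_mul hne)
    grind
  · have := hf (support_eulerD_subset f (HahnSeries.support_smul_subset β _ hD))
    grind

lemma support_Deltaminus_pow_subset (β : R) (L : ℕ) (s : ℕ → R) {f : LaurentSeries R}
    {a b : ℤ} (hf : f.support ⊆ Set.Icc a b) (m : ℕ) :
    ((Deltaminus β L s ^ m) f).support ⊆ Set.Icc a (b + m * L) := by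
  induction m with
  | zero => simpa using hf
  | succ m ih =>
    rw [pow_succ', Module.End.mul_apply]
    refine (support_Deltaminus_subset β L s ih).trans (Set.Icc_subset_Icc le_rfl ?_)
    push_cast
    linarith

lemma support_Vminus_subset (β : R) (G : R[X]) (L : ℕ) (s : ℕ → R) {f : LaurentSeries R}
    {a b : ℤ} (hf : f.support ⊆ Set.Icc a b) :
    (Vminus R β G L s f).support ⊆ Set.Icc a (b + L * G.natDegree) := by
  intro n hn
  rw [Vminus_eq_aeval_Deltaminus, aeval_eq_sum_range, LinearMap.sum_apply, HahnSeries.mem_support,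
    HahnSeries.coeff_sum] at hn
  obtain ⟨m, hm, hne⟩ := Finset.exists_ne_zero_of_sum_ne_zero hn
  have := support_Deltaminus_pow_subset β L s hf m
    (HahnSeries.support_smul_subset (G.coeff m) _ hne)
  have hm : (m : ℤ) ≤ G.natDegree := by grind
  refine Set.Icc_subset_Icc le_rfl ?_ this
  nlinarith

lemma Qminus_mem_Icc (β : R) (G : R[X]) (L : ℕ) (s : ℕ → R) {i j : ℤ}
    (h : Qminus R β G L s i j ≠ 0) :
    j ∈ Set.Icc (i - 1) (i - 1 + L * G.natDegree) :=
  support_Vminus_subset β G L s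
    (HahnSeries.support_single_subset.trans (Set.Icc_self (i - 1)).symm.subset) h

lemma coeff_mul_eq_sum_of_support_subset {P : LaurentSeries R} {T : Finset ℤ}
    (hP : P.support ⊆ T) (Q : LaurentSeries R) (n : ℤ) :
    (P * Q).coeff n = ∑ j ∈ T, P.coeff j * Q.coeff (n - j) := by
  have hsum : P = ∑ j ∈ T, HahnSeries.single j (P.coeff j) := by
    ext m
    rw [HahnSeries.coeff_sum]
    by_cases hm : m ∈ T
    · rw [Finset.sum_eq_single_of_mem m hm fun j _ hj => HahnSeries.coeff_single_of_ne hj.symm,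
        HahnSeries.coeff_single_same]
    · rw [Finset.sum_eq_zero fun j hj =>
        HahnSeries.coeff_single_of_ne fun h : m = j => hm (h ▸ hj)]
      exact not_not.mp fun h => hm (hP h)
  conv_lhs => rw [hsum]
  simp only [Finset.sum_mul, HahnSeries.coeff_sum, HahnSeries.coeff_single_mul]

lemma coe_inv_sub_one_eq_mul_coe_inv (ρ : ℤ → Rˣ) (c : ℤ → R)
    (hρ : ∀ n, (ρ n : R) = c n * ρ (n - 1)) (n : ℤ) :
    (((ρ (n - 1))⁻¹ : Rˣ) : R) = c n * ((ρ n)⁻¹ : Rˣ) := by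
  rw [Units.eq_mul_inv_iff_mul_eq, hρ, mul_left_comm, Units.inv_mul, mul_one]

end

theorem adapted_basis_minus_multiplicative_system_general (R : Type*) [CommRing R] (β γ : R)
    (G : Polynomial R)
    (ρ : ℤ → Rˣ)
    (hρ : ∀ n : ℤ, (ρ n : R) = γ * G.eval ((n : R) * β) * (ρ (n - 1) : R))
    (L : ℕ) (s : ℕ → R)
    (hbar : ℤ → R) (hbarneg : ∀ n : ℤ, n < 0 → hbar n = 0)
    (hbarrec : ∀ n : ℤ, 1 ≤ n →
      β * (n : R) * hbar n = -∑ k ∈ Finset.Icc 1 L, (k : R) * s k * hbar (n - (k : ℤ)))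
    (Ψm : ℤ → LaurentSeries R)
    (hΨ : ∀ k n : ℤ, (Ψm k).coeff n = ((ρ (-n))⁻¹ : Rˣ) * hbar (n - k)) :
    ∀ i : ℤ,
      (∀ j : ℤ, Qminus R β G L s i j ≠ 0 →
        i - 1 ≤ j ∧ j ≤ i - 1 + (L : ℤ) * (G.natDegree : ℤ)) ∧
      Ψm i = γ • (HahnSeries.single (1 : ℤ) (1 : R) *
        ∑ j ∈ Finset.Icc (i - 1) (i - 1 + (L : ℤ) * (G.natDegree : ℤ)),
          Qminus R β G L s i j • Ψm j) := by
  intro i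
  refine ⟨fun j hj => Qminus_mem_Icc β G L s hj, ?_⟩
  obtain ⟨H, hH⟩ : ∃ H : LaurentSeries R, H.coeff = hbar :=
    ⟨HahnSeries.ofSuppBddBelow hbar ⟨0, fun n hn => not_lt.mp (mt (hbarneg n) hn)⟩, rfl⟩
  set V := Vminus R β G L s (HahnSeries.single (i - 1) 1)
  have hV : V.support ⊆ ↑(Finset.Icc (i - 1) (i - 1 + (L : ℤ) * (G.natDegree : ℤ))) := by
    rw [Finset.coe_Icc]
    exact fun j hj => Qminus_mem_Icc β G L s hj
  ext n
  have hρinv := coe_inv_sub_one_eq_mul_coe_inv ρ _ hρ (1 - n)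
  rw [sub_sub_cancel_left] at hρinv
  calc (Ψm i).coeff n
      = γ * ((ρ (1 - n))⁻¹ : Rˣ) * (G.eval (-β * (n - 1 : ℤ)) * hbar (n - i)) := by
        rw [hΨ, hρinv]
        push_cast
        ring_nf
    _ = γ * ((ρ (1 - n))⁻¹ : Rˣ) * (H * V).coeff (n - 1) := by
        rw [coeff_mul_Vminus β G L s (smul_eulerD_eq_neg_Spoly_mul β L s hbar hbarneg hbarrec hH),
          mul_comm H, HahnSeries.coeff_single_mul, one_mul, hH]
        ring_nf
    _ = (γ • (HahnSeries.single (1 : ℤ) (1 : R) *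
          ∑ j ∈ Finset.Icc (i - 1) (i - 1 + (L : ℤ) * (G.natDegree : ℤ)),
            Qminus R β G L s i j • Ψm j)).coeff n := by
        simp only [mul_comm H, coeff_mul_eq_sum_of_support_subset hV, HahnSeries.coeff_smul,
          HahnSeries.coeff_single_mul, HahnSeries.coeff_sum, hΨ, hH, neg_sub, smul_eq_mul,
          one_mul, Finset.mul_sum]
        refine Finset.sum_congr rfl fun j _ => ?_
        rw [show Qminus R β G L s i j = V.coeff j from rfl]
        ring

/-- the finite-band multiplicative relation
`Ψ⁻_i = γ • (x · Σ_j Q⁻_{ij} Ψ⁻_j)`, with `Q⁻_{ij} ≠ 0` only for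
`i−1 ≤ j ≤ i−1+LM` (componentwise form of `(γx)⁻¹ Ψ⃗⁻ = Q⁻ Ψ⃗⁻`). -/
theorem adapted_basis_minus_multiplicative_system (R : Type*) [CommRing R] (β γ : R)
    (G : Polynomial R) (hG : G.coeff 0 = 1)
    (ρ : ℤ → Rˣ) (hρ0 : ρ 0 = 1)
    (hρ : ∀ n : ℤ, (ρ n : R) = γ * G.eval ((n : R) * β) * (ρ (n - 1) : R))
    (L : ℕ) (hL : 1 ≤ L) (s : ℕ → R)
    (hbar : ℤ → R) (hbar0 : hbar 0 = 1) (hbarneg : ∀ n : ℤ, n < 0 → hbar n = 0)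
    (hbarrec : ∀ n : ℤ, 1 ≤ n →
      β * (n : R) * hbar n = -∑ k ∈ Finset.Icc 1 L, (k : R) * s k * hbar (n - (k : ℤ)))
    (Ψm : ℤ → LaurentSeries R)
    (hΨ : ∀ k n : ℤ, (Ψm k).coeff n = ((ρ (-n))⁻¹ : Rˣ) * hbar (n - k)) :
    ∀ i : ℤ,
      (∀ j : ℤ, Qminus R β G L s i j ≠ 0 →
        i - 1 ≤ j ∧ j ≤ i - 1 + (L : ℤ) * (G.natDegree : ℤ)) ∧
      Ψm i = γ • (HahnSeries.single (1 : ℤ) (1 : R) *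
        ∑ j ∈ Finset.Icc (i - 1) (i - 1 + (L : ℤ) * (G.natDegree : ℤ)),
          Qminus R β G L s i j • Ψm j) :=
  adapted_basis_minus_multiplicative_system_general R β γ G ρ hρ L s hbar hbarneg hbarrec Ψm hΨ
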